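/- arXiv:0807.4343 — 3 statements merged into one kernel-verified Lean document; each statement's English description precedes it below -/
import Mathlib

section
/- For an infinite set Ω, the cofinality of the group Sym(Ω) is strictly greater than the cardinality of Ω; that is, Sym(Ω) cannot be written as the union of a chain of proper subgroups indexed by a set of cardinality at most |Ω|. -/
/-!
Write `Ω ≅ ι × (ℤ × Ω)` and suppose `Sym(Ω) = ⋃ H i` for a chain of subgroups. A diagonal
argument gives a slice `k` such that `H k` induces every permutation of `{k} × (ℤ × Ω)`. So once
some `H j ≥ H k` contains the shift of the slice, the permutations of the slice whose extension
by the identity lies in `H j` form a normal subgroup of the symmetric group of the slice that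
contains the shift. Commutators with the shift give every permutation of a single level, and
conjugates of those generate everything; hence `H j` contains `Sym(A)` for the slice `A`.
One more conjugation puts `Sym(B)` into some `H j'` as well, for a set `B` with `A ∪ B = Ω` and
`|A ∩ B| = |Ω|`, and such `Sym(A)` and `Sym(B)` generate `Sym(Ω)`: any permutation can be
corrected inside `A` and inside `B` until it fixes `Ω \ A` pointwise.
-/

universe u

open Cardinal Set Function MulAction
open scoped commutatorElement

namespace Cardinal

variable {α : Type*}

theorem mk_eq_of_subset_of_mk_eq {s t : Set α} (hst : s ⊆ t) (hs : #s = #α) : #t = #α :=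
  le_antisymm (mk_set_le t) (hs ▸ mk_le_mk_of_subset hst)

theorem mk_eq_of_injective_of_forall_mem {α β : Type u} {f : β → α} (hf : Injective f)
    {s : Set α} (hs : ∀ b, f b ∈ s) (h : #α ≤ #β) : #s = #α :=
  mk_eq_of_subset_of_mk_eq (range_subset_iff.2 hs)
    (le_antisymm (mk_set_le _) (h.trans (mk_range_eq f hf).ge))

theorem mk_eq_or_mk_eq_of_mk_union_eq [Infinite α] {s t : Set α} (h : #↥(s ∪ t) = #α) :
    #s = #α ∨ #t = #α := by
  by_contra! hne
  have := add_lt_of_lt (aleph0_le_mk α) ((mk_set_le s).lt_of_ne hne.1)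
    ((mk_set_le t).lt_of_ne hne.2)
  exact (h ▸ mk_union_le s t).not_gt this

theorem mk_prod_int_prod_eq {ι Y : Type u} [Nonempty ι] [Infinite Y] (h : #ι ≤ #Y) :
    #(ι × (ℤ × Y)) = #Y := by
  simp [aleph0_mul_eq (aleph0_le_mk Y), mul_eq_right (aleph0_le_mk Y) h (mk_ne_zero ι)]

end Cardinal

namespace Subgroup

variable {G ι : Type*} [Group G] [LinearOrder ι] {H : ι → Subgroup G}

theorem exists_le_and_mem_of_monotone (hH : Monotone H) (hcover : ∀ g, ∃ i, g ∈ H i) (i : ι)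
    (g : G) : ∃ j, H i ≤ H j ∧ g ∈ H j :=
  let ⟨m, hm⟩ := hcover g
  ⟨max i m, hH (le_max_left i m), hH (le_max_right i m) hm⟩

theorem exists_eq_top_of_monotone_of_finite [Finite ι] (hH : Monotone H)
    (hcover : ∀ g, ∃ i, g ∈ H i) : ∃ i, H i = ⊤ := by
  have : Nonempty ι := let ⟨i, _⟩ := hcover 1; ⟨i⟩
  obtain ⟨m, hm⟩ := Finite.exists_max (id : ι → ι)
  exact ⟨m, eq_top_iff.2 fun g _ => (hcover g).elim fun i hi => hH (hm i) hi⟩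

end Subgroup

namespace Equiv.Perm

variable {α : Type*}

theorem mem_fixingSubgroup_iff' {g : Perm α} {s : Set α} :
    g ∈ fixingSubgroup (Perm α) s ↔ ∀ x ∈ s, g x = x :=
  mem_fixingSubgroup_iff _

theorem exists_mem_fixingSubgroup_apply_eq {U X Y : Set α} (hX : X ⊆ U) (hY : Y ⊆ U) (e : X ≃ Y)
    (h : #↥(U \ X) = #↥(U \ Y)) : ∃ g ∈ fixingSubgroup (Perm α) Uᶜ, ∀ x : X, g x = e x := by
  classical
  obtain ⟨e'⟩ := Cardinal.eq.1 h
  let e₁ : {u : U // (u : α) ∈ X} ≃ {u : U // (u : α) ∈ Y} :=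
    (subtypeSubtypeEquivSubtype (hX ·)).trans (e.trans (subtypeSubtypeEquivSubtype (hY ·)).symm)
  let e₂ : {u : U // (u : α) ∉ X} ≃ {u : U // (u : α) ∉ Y} :=
    (subtypeSubtypeEquivSubtypeInter _ _).trans
      (e'.trans (subtypeSubtypeEquivSubtypeInter _ (· ∉ Y)).symm)
  refine ⟨ofSubtype (e₁.subtypeCongr e₂), mem_fixingSubgroup_iff'.2 fun y hy => ?_, fun x => ?_⟩
  · exact ofSubtype_apply_of_not_mem _ hy
  · rw [ofSubtype_apply_of_mem _ (hX x.2)]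
    simp only [Equiv.subtypeCongr, trans_apply, Subtype.coe_prop, sumCompl_symm_apply_of_pos,
      Equiv.sumCongr_apply, coe_trans, Sum.map_inl, comp_apply, sumCompl_apply_inl,
      subtypeSubtypeEquivSubtype_symm_apply_coe_coe, e₁]
    rfl

theorem exists_mem_fixingSubgroup_image_eq {U X Y : Set α} (hX : X ⊆ U) (hY : Y ⊆ U)
    (hXY : #X = #Y) (h : #↥(U \ X) = #↥(U \ Y)) :
    ∃ g ∈ fixingSubgroup (Perm α) Uᶜ, g '' X = Y := by
  obtain ⟨e⟩ := Cardinal.eq.1 hXY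
  obtain ⟨g, hg, hge⟩ := exists_mem_fixingSubgroup_apply_eq hX hY e h
  refine ⟨g, hg, Subset.antisymm ?_ fun y hy => ⟨e.symm ⟨y, hy⟩, Subtype.prop _, by simp [hge]⟩⟩
  rintro _ ⟨x, hx, rfl⟩
  exact (hge ⟨x, hx⟩).symm ▸ Subtype.prop _

theorem exists_image_eq {X Y : Set α} (hXY : #X = #Y) (h : #↥Xᶜ = #↥Yᶜ) :
    ∃ g : Perm α, g '' X = Y := by
  simp only [compl_eq_univ_sdiff] at h
  obtain ⟨g, -, hg⟩ := exists_mem_fixingSubgroup_image_eq (subset_univ X) (subset_univ Y) hXY h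
  exact ⟨g, hg⟩

theorem inv_mul_mul_mem_fixingSubgroup {g τ : Perm α} {s : Set α}
    (hτ : τ ∈ fixingSubgroup (Perm α) (g '' s)) : g⁻¹ * τ * g ∈ fixingSubgroup (Perm α) s := by
  rw [mem_fixingSubgroup_iff'] at hτ ⊢
  intro x hx
  simp [hτ (g x) (mem_image_of_mem g hx)]

theorem mem_sup_of_mk_inter_image_eq [Infinite α] {A B C₁ C₂ : Set α} (hAB : Aᶜ ⊆ B)
    (h₁ : C₁ ⊆ A ∩ B) (h₂ : C₂ ⊆ A ∩ B) (hC : _root_.Disjoint C₁ C₂) (hC₁ : #C₁ = #α)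
    (hC₂ : #C₂ = #α) {σ : Perm α} (hσ : #↥(A ∩ σ '' A) = #α) :
    σ ∈ fixingSubgroup (Perm α) Aᶜ ⊔ fixingSubgroup (Perm α) Bᶜ := by
  -- Inside `A`, push the part `A \ σ '' A` of `σ '' Aᶜ` into `C₁`. Then `a * σ` maps `Aᶜ`
  -- into `B \ C₂`, and inside `B` there is room to send it back to `Aᶜ` pointwise.
  obtain ⟨T, hTC₁, hTW⟩ := le_mk_iff_exists_subset.1 (hC₁ ▸ mk_set_le (A \ σ '' A))
  obtain ⟨a, ha, haW⟩ := exists_mem_fixingSubgroup_image_eq sdiff_subset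
    (hTC₁.trans (h₁.trans inter_subset_left)) hTW.symm (by
      rw [sdiff_sdiff_right_self, hσ, mk_eq_of_subset_of_mk_eq _ hC₂]
      exact fun x hx => ⟨(h₂ hx).1, fun hxT => hC.notMem_of_mem_right hx (hTC₁ hxT)⟩)
  have hmaps : ∀ x ∉ A, (a * σ) x ∈ B \ C₂ := by
    intro x hx
    by_cases hσx : σ x ∈ A
    · have : a (σ x) ∈ T := haW ▸ mem_image_of_mem a
        ⟨hσx, fun ⟨y, hy, hyx⟩ => hx (σ.injective hyx ▸ hy)⟩
      exact ⟨(h₁ (hTC₁ this)).2, hC.notMem_of_mem_left (hTC₁ this)⟩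
    · rw [mul_apply, mem_fixingSubgroup_iff'.1 ha _ hσx]
      exact ⟨hAB hσx, fun h => hσx (h₂ h).1⟩
  obtain ⟨b, hb, hba⟩ := exists_mem_fixingSubgroup_apply_eq (U := B)
    (image_subset_iff.2 fun x hx => (hmaps x hx).1) hAB
    (Equiv.Set.image _ _ (a * σ).injective).symm (by
      rw [mk_eq_of_subset_of_mk_eq _ hC₂, mk_eq_of_subset_of_mk_eq _ hC₁]
      · exact fun x hx => ⟨(h₁ hx).2, not_not.2 (h₁ hx).1⟩
      · rintro x hx
        refine ⟨(h₂ hx).2, ?_⟩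
        rintro ⟨y, hy, rfl⟩
        exact (hmaps y hy).2 hx)
  have hτ : b * a * σ ∈ fixingSubgroup (Perm α) Aᶜ := by
    refine mem_fixingSubgroup_iff'.2 fun x hx => ?_
    exact (hba ⟨(a * σ) x, x, hx, rfl⟩).trans
      (congrArg Subtype.val (Equiv.Set.image_symm_apply _ _ _ x _))
  have : σ = a⁻¹ * b⁻¹ * (b * a * σ) := by group
  rw [this]
  exact mul_mem (mul_mem (inv_mem (Subgroup.mem_sup_left ha))
    (inv_mem (Subgroup.mem_sup_right hb))) (Subgroup.mem_sup_left hτ)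

theorem fixingSubgroup_compl_sup_fixingSubgroup_compl_eq_top [Infinite α] {A B C₁ C₂ : Set α}
    (hAB : Aᶜ ⊆ B) (h₁ : C₁ ⊆ A ∩ B) (h₂ : C₂ ⊆ A ∩ B) (hC : _root_.Disjoint C₁ C₂)
    (hC₁ : #C₁ = #α) (hC₂ : #C₂ = #α) :
    fixingSubgroup (Perm α) Aᶜ ⊔ fixingSubgroup (Perm α) Bᶜ = ⊤ := by
  refine eq_top_iff.2 fun σ _ => ?_
  have hσA : #↥(σ '' A ∩ A ∪ σ '' A \ A) = #α := by
    rw [inter_union_sdiff, mk_image_eq σ.injective]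
    exact mk_eq_of_subset_of_mk_eq (h₁.trans inter_subset_left) hC₁
  rcases mk_eq_or_mk_eq_of_mk_union_eq hσA with h | h
  · exact mem_sup_of_mk_inter_image_eq hAB h₁ h₂ hC hC₁ hC₂ (by rwa [inter_comm])
  -- otherwise `σ` carries a large part of `A` outside `A`; move it onto `C₂` inside `B`
  obtain ⟨b, hb, hbC₂⟩ := exists_mem_fixingSubgroup_image_eq (U := B) (fun x hx => hAB hx.2)
    (h₂.trans inter_subset_right) (h.trans hC₂.symm) (by
      rw [mk_eq_of_subset_of_mk_eq _ hC₁, mk_eq_of_subset_of_mk_eq _ hC₁]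
      · exact fun x hx => ⟨(h₁ hx).2, hC.notMem_of_mem_left hx⟩
      · exact fun x hx => ⟨(h₁ hx).2, fun hx' => hx'.2 (h₁ hx).1⟩)
  have hbσ : b * σ ∈ fixingSubgroup (Perm α) Aᶜ ⊔ fixingSubgroup (Perm α) Bᶜ := by
    refine mem_sup_of_mk_inter_image_eq hAB h₁ h₂ hC hC₁ hC₂ (mk_eq_of_subset_of_mk_eq ?_ hC₂)
    rw [coe_mul, image_comp]
    exact subset_inter (fun x hx => (h₂ hx).1) (hbC₂ ▸ image_mono sdiff_subset)
  simpa using mul_mem (inv_mem (Subgroup.mem_sup_right hb)) hbσ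

section ProdExtendRight

variable {ι Z : Type*} [DecidableEq ι]

def prodExtendRightHom (k : ι) : Perm Z →* Perm (ι × Z) where
  toFun := prodExtendRight k
  map_one' := by
    ext ⟨i, z⟩ <;> by_cases h : i = k <;> simp [prodExtendRight, h]
  map_mul' χ₁ χ₂ := by
    ext ⟨i, z⟩ <;> by_cases h : i = k <;> simp [prodExtendRight, h]

@[simp]
theorem prodExtendRightHom_apply (k : ι) (χ : Perm Z) :
    prodExtendRightHom k χ = prodExtendRight k χ :=
  rfl

theorem fst_apply_eq_of_mem_fixingSubgroup {τ : Perm (ι × Z)} {k : ι}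
    (hτ : τ ∈ fixingSubgroup (Perm (ι × Z)) {p : ι × Z | p.1 ≠ k}) (z : Z) :
    (τ (k, z)).1 = k := by
  by_contra h
  exact h (congrArg Prod.fst (τ.injective (mem_fixingSubgroup_iff'.1 hτ _ h)))

theorem range_prodExtendRightHom (k : ι) :
    (prodExtendRightHom k : Perm Z →* _).range =
      fixingSubgroup (Perm (ι × Z)) {p : ι × Z | p.1 ≠ k} := by
  ext τ
  constructor
  · rintro ⟨χ, rfl⟩
    exact mem_fixingSubgroup_iff'.2 fun ⟨i, z⟩ hi => prodExtendRight_apply_ne _ hi z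
  intro hτ
  have h := fst_apply_eq_of_mem_fixingSubgroup hτ
  have h' := fst_apply_eq_of_mem_fixingSubgroup (inv_mem hτ)
  have hk : ∀ z, τ (k, z) = (k, (τ (k, z)).2) := fun z => Prod.ext (h z) rfl
  have hk' : ∀ z, τ⁻¹ (k, z) = (k, (τ⁻¹ (k, z)).2) := fun z => Prod.ext (h' z) rfl
  refine ⟨⟨fun z => (τ (k, z)).2, fun z => (τ⁻¹ (k, z)).2, fun z => ?_, fun z => ?_⟩, ?_⟩
  · simp [← hk]
  · simp only [← hk']
    simp
  ext1 ⟨i, z⟩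
  by_cases hi : i = k
  · subst hi
    simp [← hk]
  · rw [prodExtendRightHom_apply, prodExtendRight_apply_ne _ hi,
      mem_fixingSubgroup_iff'.1 hτ (i, z) hi]

theorem mul_prodExtendRight_mul_inv {g : Perm (ι × Z)} {k : ι} {φ : Perm Z}
    (hg : ∀ z, g (k, z) = (k, φ z)) (χ : Perm Z) :
    g * prodExtendRight k χ * g⁻¹ = prodExtendRight k (φ * χ * φ⁻¹) := by
  have hg' : ∀ z, g⁻¹ (k, z) = (k, φ⁻¹ z) := fun z => by
    rw [inv_eq_iff_eq, hg]
    simp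
  ext1 ⟨i, z⟩
  by_cases hi : i = k
  · subst hi
    simp [mul_apply, hg', hg]
  · have hfst : (g⁻¹ (i, z)).1 ≠ k := fun h => by
      have := hg (g⁻¹ (i, z)).2
      rw [← h] at this
      simp only [coe_inv, Prod.mk.eta, apply_symm_apply, Prod.mk.injEq] at this
      exact hi (this.1.trans h)
    rw [mul_apply, mul_apply, ← Prod.mk.eta (p := g⁻¹ (i, z)), prodExtendRight_apply_ne _ hfst]
    simp [prodExtendRight_apply_ne _ hi]

end ProdExtendRight

theorem fixingSubgroup_le_of_normal {K : Subgroup (Perm α)} [K.Normal] {s t : Set α}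
    (hs : fixingSubgroup (Perm α) s ≤ K) (hst : #s = #t) (hst' : #↥sᶜ = #↥tᶜ) :
    fixingSubgroup (Perm α) t ≤ K := by
  intro τ hτ
  obtain ⟨g, rfl⟩ := exists_image_eq hst hst'
  simpa [mul_assoc] using ‹K.Normal›.conj_mem _ (hs (inv_mul_mul_mem_fixingSubgroup hτ)) g

section Shift

variable {Y : Type*}

def intShift : Perm (ℤ × Y) := (Equiv.addRight 1).prodCongr (Equiv.refl Y)

-- The staircase acting as `σ` on every level `n ≥ 0` differs from its shifted copy only on
-- level `0`.
theorem commutatorElement_prodCongrRight_intShift (σ : Perm Y) :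
    ⁅(prodCongrRight fun n : ℤ => if 0 ≤ n then σ else 1 : Perm (ℤ × Y)), intShift⁆ =
      prodExtendRight 0 σ := by
  ext1 ⟨n, y⟩
  rcases lt_trichotomy n 0 with hn | rfl | hn
  · simp [commutatorElement_def, intShift, mul_apply, prodExtendRight_apply_ne _ hn.ne,
      hn.not_ge, show ¬1 ≤ n by omega]
  · simp [commutatorElement_def, intShift, pull_end]
  · simp [commutatorElement_def, intShift, mul_apply, prodExtendRight_apply_ne _ hn.ne', hn.le,
      show 1 ≤ n by omega]

theorem normal_eq_top_of_intShift_mem [Infinite Y] (K : Subgroup (Perm (ℤ × Y))) [hK : K.Normal]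
    (h : intShift ∈ K) : K = ⊤ := by
  have hZ : #(ℤ × Y) ≤ #Y := by simp [aleph0_mul_eq (aleph0_le_mk Y)]
  have full : ∀ (n : ℤ) {S : Set (ℤ × Y)}, (∀ y, (n, y) ∈ S) → #S = #(ℤ × Y) :=
    fun n _ hn => mk_eq_of_injective_of_forall_mem (Prod.mk_right_injective n) hn hZ
  have h₀ : fixingSubgroup (Perm (ℤ × Y)) {p : ℤ × Y | p.1 ≠ 0} ≤ K := by
    rw [← range_prodExtendRightHom]
    rintro _ ⟨σ, rfl⟩
    rw [prodExtendRightHom_apply, ← commutatorElement_prodCongrRight_intShift,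
      commutatorElement_def]
    exact mul_mem (hK.conj_mem _ h _) (inv_mem h)
  rw [eq_top_iff, ← fixingSubgroup_compl_sup_fixingSubgroup_compl_eq_top
    (A := {p : ℤ × Y | p.1 ≤ 1}) (B := {p | -1 ≤ p.1}) (C₁ := {p | p.1 = 1})
    (C₂ := {p | p.1 = -1})
    (fun p (hp : ¬p.1 ≤ 1) => show -1 ≤ p.1 by omega)
    (fun p (hp : p.1 = 1) => show p.1 ≤ 1 ∧ -1 ≤ p.1 by omega)
    (fun p (hp : p.1 = -1) => show p.1 ≤ 1 ∧ -1 ≤ p.1 by omega)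
    (Set.disjoint_left.2 fun p (h₁ : p.1 = 1) (h₂ : p.1 = -1) => by omega)
    (full 1 fun _ => rfl) (full (-1) fun _ => rfl)]
  refine sup_le (fixingSubgroup_le_of_normal h₀ ?_ ?_) (fixingSubgroup_le_of_normal h₀ ?_ ?_)
  · rw [full 1 (by simp), full 2 (by simp)]
  · rw [full 0 (by simp), full 0 (by simp)]
  · rw [full 1 (by simp), full (-2) (by simp)]
  · rw [full 0 (by simp), full 0 (by simp)]

end Shift

theorem exists_forall_exists_mem_apply_eq {ι Z : Type*} (H : ι → Subgroup (Perm (ι × Z)))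
    (hcover : ∀ g, ∃ i, g ∈ H i) : ∃ k, ∀ φ : Perm Z, ∃ g ∈ H k, ∀ z, g (k, z) = (k, φ z) := by
  by_contra! hne
  choose φ hφ using hne
  obtain ⟨k, hk⟩ := hcover (prodCongrRight φ)
  obtain ⟨z, hz⟩ := hφ k _ hk
  exact hz (prodCongrRight_apply φ k z)

theorem exists_fixingSubgroup_fst_ne_le {ι Y : Type*} [LinearOrder ι] [Infinite Y]
    {H : ι → Subgroup (Perm (ι × (ℤ × Y)))} (hH : Monotone H) (hcover : ∀ g, ∃ i, g ∈ H i) :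
    ∃ k j, fixingSubgroup (Perm (ι × (ℤ × Y))) {p : ι × (ℤ × Y) | p.1 ≠ k} ≤ H j := by
  obtain ⟨k, hk⟩ := exists_forall_exists_mem_apply_eq H hcover
  obtain ⟨j, hkj, hj⟩ :=
    Subgroup.exists_le_and_mem_of_monotone hH hcover k (prodExtendRight k intShift)
  have hN : ((H j).comap (prodExtendRightHom k)).Normal := ⟨fun χ hχ φ => by
    obtain ⟨g, hg, hgφ⟩ := hk φ
    simp only [Subgroup.mem_comap, prodExtendRightHom_apply, ← mul_prodExtendRight_mul_inv hgφ]
      at hχ ⊢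
    exact mul_mem (mul_mem (hkj hg) hχ) (inv_mem (hkj hg))⟩
  refine ⟨k, j, ?_⟩
  rw [← range_prodExtendRightHom, MonoidHom.range_eq_map, Subgroup.map_le_iff_le_comap,
    normal_eq_top_of_intShift_mem ((H j).comap (prodExtendRightHom k)) hj]

theorem exists_eq_top_of_monotone {ι Y : Type u} [LinearOrder ι] [Nontrivial ι]
    [Infinite Y] (hιY : #ι ≤ #Y) {H : ι → Subgroup (Perm (ι × (ℤ × Y)))} (hH : Monotone H)
    (hcover : ∀ g, ∃ i, g ∈ H i) : ∃ i, H i = ⊤ := by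
  obtain ⟨k, j₁, hA⟩ := exists_fixingSubgroup_fst_ne_le hH hcover
  obtain ⟨k', hk'⟩ := exists_ne k
  have full : ∀ (i : ι) (n : ℤ) {S : Set (ι × (ℤ × Y))}, (∀ y, (i, (n, y)) ∈ S) →
      #S = #(ι × (ℤ × Y)) := fun i n _ h =>
    mk_eq_of_injective_of_forall_mem ((Prod.mk_right_injective i).comp
      (Prod.mk_right_injective n)) h (mk_prod_int_prod_eq hιY).le
  let B : Set (ι × (ℤ × Y)) := {p | p.1 = k → p.2.1 ≠ 0}
  obtain ⟨μ, hμ⟩ := exists_image_eq (X := {p : ι × (ℤ × Y) | p.1 ≠ k}) (Y := Bᶜ)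
    (by rw [full k' 0 (by simp [hk']), full k 0 (by simp [B])])
    (by rw [compl_compl, full k 0 (by simp), full k 1 (by simp [B])])
  obtain ⟨j₂, hj, hμj⟩ := Subgroup.exists_le_and_mem_of_monotone hH hcover j₁ μ
  have hB : fixingSubgroup (Perm _) Bᶜ ≤ H j₂ := fun τ hτ => by
    have := hj (hA (inv_mul_mul_mem_fixingSubgroup (hμ ▸ hτ)))
    simpa [mul_assoc] using mul_mem (mul_mem hμj this) (inv_mem hμj)
  refine ⟨j₂, eq_top_iff.2 ?_⟩
  rw [← fixingSubgroup_compl_sup_fixingSubgroup_compl_eq_top (A := {p : ι × (ℤ × Y) | p.1 = k})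
    (B := B) (C₁ := {p | p.1 = k ∧ p.2.1 = 1}) (C₂ := {p | p.1 = k ∧ p.2.1 = -1})
    (fun p hp hpk => absurd hpk hp) (fun _ ⟨hk, hn⟩ => ⟨hk, fun _ => by omega⟩)
    (fun _ ⟨hk, hn⟩ => ⟨hk, fun _ => by omega⟩)
    (Set.disjoint_left.2 fun p (h₁ : _ ∧ p.2.1 = 1) (h₂ : _ ∧ p.2.1 = -1) => by omega)
    (full k 1 fun _ => by simp) (full k (-1) fun _ => by simp)]
  exact sup_le (hA.trans hj) hB

end Equiv.Perm

/-- For an infinite set `Ω`, the cofinality of `Sym(Ω)` is strictly greater than `|Ω|`: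
`Sym(Ω)` is not the union of a chain of proper subgroups indexed by a linearly ordered
set of cardinality at most `|Ω|`. -/
theorem sym_cofinality_gt (Ω : Type) [Infinite Ω]
    (ι : Type) [LinearOrder ι] (hcard : Cardinal.mk ι ≤ Cardinal.mk Ω)
    (H : ι → Subgroup (Equiv.Perm Ω)) (hchain : Monotone H)
    (hproper : ∀ i, H i ≠ ⊤) :
    (⋃ i, (H i : Set (Equiv.Perm Ω))) ≠ Set.univ := by
  intro hU
  have hcover : ∀ g, ∃ i, g ∈ H i := Set.iUnion_eq_univ_iff.1 hU
  suffices ∃ i, H i = ⊤ by obtain ⟨i, hi⟩ := this; exact hproper i hi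
  rcases finite_or_infinite ι with hι | hι
  · exact Subgroup.exists_eq_top_of_monotone_of_finite hchain hcover
  obtain ⟨e⟩ := Cardinal.eq.1 (Cardinal.mk_prod_int_prod_eq hcard).symm
  let f := e.permCongrHom.symm.toMonoidHom
  obtain ⟨i, hi⟩ := Equiv.Perm.exists_eq_top_of_monotone hcard (H := fun i => (H i).comap f)
    (fun i j hij => Subgroup.comap_mono (hchain hij))
    (fun g => hcover (f g))
  refine ⟨i, eq_top_iff.2 fun x _ => ?_⟩
  have := hi ▸ Subgroup.mem_top (e.permCongrHom x)
  rwa [Subgroup.mem_comap, MulEquiv.coe_toMonoidHom, MulEquiv.symm_apply_apply] at this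
end

section
/- Let G be a group with trivial center. Then Aut(G) is complete (i.e., has trivial center and all its automorphisms are inner) if and only if the subgroup Inn(G) of inner automorphisms is a characteristic subgroup of Aut(G). (Burnside's criterion.) -/
/-!
Every `α ∈ Aut(G)` satisfies `α ∘ conj g ∘ α⁻¹ = conj (α g)`, so `Inn(G)` is normal in `Aut(G)`
and, since `conj` is injective when `Z(G) = 1`, only the identity of `Aut(G)` centralizes
`Inn(G)`. Hence if `Aut(G)` is complete, every automorphism of `Aut(G)` is a conjugation and
preserves the normal subgroup `Inn(G)`. Conversely, an automorphism `ψ` of `Aut(G)` preserving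
`Inn(G) ≅ G` induces `θ ∈ Aut(G)` with `ψ (conj g) = conj (θ g)`; then `(conj θ)⁻¹ ∘ ψ` fixes
`Inn(G)` pointwise, and the same identity forces it to be trivial.
-/

open Subgroup

namespace MulAut

variable {G : Type*} [Group G]

theorem conj_apply_eq_mul_conj_mul_inv (α : MulAut G) (g : G) :
    conj (α g) = α * conj g * α⁻¹ := by
  ext x
  simp [conj_apply, mul_assoc]

theorem ker_conj : (conj : G →* MulAut G).ker = center G := by
  ext g
  simp only [MonoidHom.mem_ker, MulEquiv.ext_iff, conj_apply, one_apply, mem_center_iff]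
  exact forall_congr' fun x => by rw [mul_inv_eq_iff_eq_mul, eq_comm]

theorem conj_injective (hZ : center G = ⊥) : Function.Injective (conj : G →* MulAut G) := by
  rw [← MonoidHom.ker_eq_bot_iff, ker_conj, hZ]

instance normal_range_conj : (conj : G →* MulAut G).range.Normal where
  conj_mem := by
    rintro _ ⟨g, rfl⟩ α
    exact ⟨α g, conj_apply_eq_mul_conj_mul_inv α g⟩

theorem centralizer_range_conj (hZ : center G = ⊥) :
    centralizer ((conj : G →* MulAut G).range : Set (MulAut G)) = ⊥ := by
  refine eq_bot_iff.2 fun α hα => (mem_bot).2 <| MulEquiv.ext fun g => conj_injective hZ ?_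
  rw [conj_apply_eq_mul_conj_mul_inv, ← hα _ ⟨g, rfl⟩, mul_inv_cancel_right, one_apply]

theorem center_eq_bot (hZ : center G = ⊥) : center (MulAut G) = ⊥ :=
  eq_bot_iff.2 <| (center_le_centralizer _).trans (centralizer_range_conj hZ).le

theorem eq_one_of_forall_apply_conj (hZ : center G = ⊥) (χ : MulAut (MulAut G))
    (hχ : ∀ g, χ (conj g) = conj g) : χ = 1 := by
  refine MulEquiv.ext fun α => MulEquiv.ext fun g => conj_injective hZ ?_
  calc conj (χ α g) = χ α * χ (conj g) * (χ α)⁻¹ := by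
        rw [conj_apply_eq_mul_conj_mul_inv, hχ]
    _ = χ (conj (α g)) := by rw [conj_apply_eq_mul_conj_mul_inv, map_mul, map_mul, map_inv]
    _ = conj (α g) := hχ _

theorem exists_eq_conj_of_map_range_conj_eq (hZ : center G = ⊥) (ψ : MulAut (MulAut G))
    (hψ : (conj : G →* MulAut G).range.map ψ.toMonoidHom = (conj : G →* MulAut G).range) :
    ∃ θ : MulAut G, ψ = conj θ := by
  let e := MonoidHom.ofInjective (conj_injective hZ)
  let θ : MulAut G :=
    e.trans <| (ψ.subgroupMap _).trans <| (MulEquiv.subgroupCongr hψ).trans e.symm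
  have hθ (g : G) : conj (θ g) = ψ (conj g) :=
    MonoidHom.apply_ofInjective_symm (conj_injective hZ) _
  refine ⟨θ, (inv_mul_eq_one.1 <| eq_one_of_forall_apply_conj hZ _ fun g => ?_).symm⟩
  rw [mul_apply, inv_apply, ← hθ, conj_symm_apply, conj_apply_eq_mul_conj_mul_inv]
  group

end MulAut

/-- Burnside's criterion: for a group `G` with trivial center, `Aut(G)` is complete
(trivial center and every automorphism inner) iff `Inn(G)` (the range of the conjugation
homomorphism `G →* Aut(G)`) is a characteristic subgroup of `Aut(G)`. -/
theorem burnside_completeness_criterion (G : Type) [Group G]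
    (hZ : Subgroup.center G = ⊥) :
    (Subgroup.center (MulAut G) = ⊥ ∧
        ∀ ψ : MulAut (MulAut G), ∃ γ : MulAut G, ψ = MulAut.conj γ) ↔
      (∀ φ : MulAut (MulAut G),
        Subgroup.map φ.toMonoidHom (MulAut.conj : G →* MulAut G).range =
          (MulAut.conj : G →* MulAut G).range) := by
  constructor
  · rintro ⟨-, h_inner⟩ φ
    obtain ⟨γ, rfl⟩ := h_inner φ
    exact Normal.map_conj_eq _ γ
  · exact fun h_char => ⟨MulAut.center_eq_bot hZ,
      fun ψ => MulAut.exists_eq_conj_of_map_range_conj_eq hZ ψ (h_char ψ)⟩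
end

section
/- Let F be a free group of infinite rank. Then every element of F is a product of two primitive elements of F. -/
/-!
Pick a generator `a` that does not occur in `g`. The substitution `a ↦ g * a` is then an
automorphism of the free group (its inverse is `a ↦ g⁻¹ * a`, since it fixes `g`), and so is
`a ↦ a⁻¹`. Automorphisms carry the standard basis to a basis, so `g * a` and `a⁻¹` are
primitive, and `g = (g * a) * a⁻¹`.
-/

/-- An element of a free group is primitive if it belongs to some basis (free generating
set) of the group. -/
def IsPrimitive {α : Type} (g : FreeGroup α) : Prop :=
  ∃ (S : Set (FreeGroup α)) (b : FreeGroupBasis S (FreeGroup α)),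
    (∀ s : S, b s = (s : FreeGroup α)) ∧ g ∈ S

open FreeGroup

section

variable {α : Type}

theorem IsPrimitive.map_mulEquiv {p : FreeGroup α} (hp : IsPrimitive p)
    (e : FreeGroup α ≃* FreeGroup α) : IsPrimitive (e p) := by
  obtain ⟨S, b, hb, hpS⟩ := hp
  let σ : S ≃ e '' S := Equiv.Set.image e S e.injective
  refine ⟨e '' S, (b.map e).reindex σ, fun t => ?_, Set.mem_image_of_mem e hpS⟩
  rw [FreeGroupBasis.reindex_apply, FreeGroupBasis.map_apply, hb]
  exact congrArg Subtype.val (σ.apply_symm_apply t)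

theorem isPrimitive_of (a : α) : IsPrimitive (of a) :=
  ⟨Set.range of,
    (FreeGroupBasis.ofFreeGroup α).reindex (Equiv.ofInjective _ of_injective),
    fun s => Equiv.apply_ofInjective_symm of_injective s, Set.mem_range_self a⟩

namespace FreeGroup

theorem mk_mem_closure_letters (L : List (α × Bool)) :
    mk L ∈ Subgroup.closure (of '' {x | x ∈ L.map Prod.fst}) := by
  induction L with
  | nil => exact Subgroup.one_mem _
  | cons p L ih =>
    have hp : mk [p] ∈ Subgroup.closure (of '' {x | x ∈ (p :: L).map Prod.fst}) := by
      have hx : of p.1 ∈ Subgroup.closure (of '' {x | x ∈ (p :: L).map Prod.fst}) :=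
        Subgroup.subset_closure ⟨p.1, by simp, rfl⟩
      obtain ⟨x, _ | _⟩ := p
      · exact Subgroup.inv_mem _ hx
      · exact hx
    have hL := Subgroup.closure_mono (Set.image_mono fun x (hx : x ∈ L.map Prod.fst) =>
      List.mem_cons_of_mem p.1 hx) ih
    simpa [mul_mk] using Subgroup.mul_mem _ hp hL

theorem exists_mem_closure_of_ne [Infinite α] (g : FreeGroup α) :
    ∃ a, g ∈ Subgroup.closure (of '' {x | x ≠ a}) := by
  classical
  obtain ⟨a, ha⟩ := Infinite.exists_notMem_finset (g.toWord.map Prod.fst).toFinset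
  have hg : g ∈ Subgroup.closure (of '' {x | x ∈ g.toWord.map Prod.fst}) := by
    simpa only [mk_toWord] using mk_mem_closure_letters g.toWord
  refine ⟨a, Subgroup.closure_mono (Set.image_mono fun x hx => ?_) hg⟩
  rintro rfl
  exact ha (List.mem_toFinset.2 hx)

section Automorphisms

variable [DecidableEq α]

def replaceGenerator (a : α) (v : FreeGroup α) : FreeGroup α →* FreeGroup α :=
  lift (Function.update of a v)

@[simp]
theorem replaceGenerator_of_self (a : α) (v : FreeGroup α) : replaceGenerator a v (of a) = v := by
  simp [replaceGenerator]

@[simp]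
theorem replaceGenerator_of_of_ne {a x : α} (h : x ≠ a) (v : FreeGroup α) :
    replaceGenerator a v (of x) = of x := by
  simp [replaceGenerator, h]

theorem replaceGenerator_eqOn_closure (a : α) (v : FreeGroup α) :
    Set.EqOn (replaceGenerator a v) (MonoidHom.id _) (Subgroup.closure (of '' {x | x ≠ a})) :=
  MonoidHom.eqOn_closure <| by
    rintro _ ⟨x, hx, rfl⟩
    exact replaceGenerator_of_of_ne hx v

theorem replaceGenerator_mul_of_comp_inv {a : α} {w : FreeGroup α}
    (hw : w ∈ Subgroup.closure (of '' {x | x ≠ a})) :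
    (replaceGenerator a (w * of a)).comp (replaceGenerator a (w⁻¹ * of a)) = MonoidHom.id _ := by
  refine ext_hom _ _ fun x => ?_
  rcases eq_or_ne x a with rfl | hx
  · have hw' : replaceGenerator x (w * of x) w⁻¹ = w⁻¹ :=
      replaceGenerator_eqOn_closure x _ (Subgroup.inv_mem _ hw)
    simp [hw']
  · simp [hx]

theorem replaceGenerator_inv_of_comp_self (a : α) :
    (replaceGenerator a (of a)⁻¹).comp (replaceGenerator a (of a)⁻¹) = MonoidHom.id _ := by
  refine ext_hom _ _ fun x => ?_
  rcases eq_or_ne x a with rfl | hx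
  · simp
  · simp [hx]

def transvection (a : α) (w : FreeGroup α) (hw : w ∈ Subgroup.closure (of '' {x | x ≠ a})) :
    FreeGroup α ≃* FreeGroup α :=
  MonoidHom.toMulEquiv _ _
    (by simpa using replaceGenerator_mul_of_comp_inv (Subgroup.inv_mem _ hw))
    (replaceGenerator_mul_of_comp_inv hw)

def invertGenerator (a : α) : FreeGroup α ≃* FreeGroup α :=
  MonoidHom.toMulEquiv _ _ (replaceGenerator_inv_of_comp_self a)
    (replaceGenerator_inv_of_comp_self a)

theorem transvection_of_self (a : α) (w : FreeGroup α)
    (hw : w ∈ Subgroup.closure (of '' {x | x ≠ a})) : transvection a w hw (of a) = w * of a :=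
  replaceGenerator_of_self a _

theorem invertGenerator_of_self (a : α) : invertGenerator a (of a) = (of a)⁻¹ :=
  replaceGenerator_of_self a _

end Automorphisms

end FreeGroup

theorem isPrimitive_mul_of {a : α} {w : FreeGroup α}
    (hw : w ∈ Subgroup.closure (of '' {x | x ≠ a})) : IsPrimitive (w * of a) := by
  classical
  exact transvection_of_self a w hw ▸ (isPrimitive_of a).map_mulEquiv (transvection a w hw)

theorem isPrimitive_of_inv (a : α) : IsPrimitive (of a)⁻¹ := by
  classical
  exact invertGenerator_of_self a ▸ (isPrimitive_of a).map_mulEquiv (invertGenerator a)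

end

/-- In a free group of infinite rank, every element is a product of two primitive
elements. -/
theorem product_of_two_primitives (α : Type) [Infinite α] (g : FreeGroup α) :
    ∃ p q : FreeGroup α, IsPrimitive p ∧ IsPrimitive q ∧ g = p * q := by
  obtain ⟨a, ha⟩ := exists_mem_closure_of_ne g
  exact ⟨g * of a, (of a)⁻¹, isPrimitive_mul_of ha, isPrimitive_of_inv a, by group⟩
end
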